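/- Let N_g ≥ 4N_c+1, V a real-valued continuous R-periodic function, and v_{N_c}, w_{N_c} ∈ V_{N_c}. Then ∫_Γ I_{N_g}(V v_{N_c} w_{N_c}) = ∫_Γ I_{N_g}(V) v_{N_c} w_{N_c}, where I_{N_g} is the grid interpolation operator onto W^{3D}_{N_g}. -/

import Mathlib

open MeasureTheory

noncomputable section

namespace TFW

/-- squared euclidean norm of an integer wavevector index -/
def zsq (n : Fin 3 → ℤ) : ℝ := ∑ i, ((n i : ℝ))^2

/-- norm of the wavevector k = (2π/L) n -/
def knorm (L : ℝ) (n : Fin 3 → ℤ) : ℝ := (2 * Real.pi / L) * Real.sqrt (zsq n)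

/-- Sobolev weight (1+|k|²)^s -/
def sobW (L s : ℝ) (n : Fin 3 → ℤ) : ℝ := (1 + (knorm L n)^2) ^ s

/-- H^s norm from Fourier coefficients -/
def Hnorm (L s : ℝ) (c : (Fin 3 → ℤ) → ℂ) : ℝ :=
  Real.sqrt (∑' n : Fin 3 → ℤ, sobW L s n * ‖c n‖^2)

/-- Fourier truncation to |k| ≤ 2πN_c/L -/
def trunc (L : ℝ) (Nc : ℕ) (c : (Fin 3 → ℤ) → ℂ) : (Fin 3 → ℤ) → ℂ :=
  fun n => if knorm L n ≤ 2 * Real.pi * Nc / L then c n else 0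

/-- the planewave e_k, k = (2π/L)n -/
def ek (L : ℝ) (n : Fin 3 → ℤ) (x : Fin 3 → ℝ) : ℂ :=
  (((L ^ 3 : ℝ) ^ (-(1/2 : ℝ)) : ℝ) : ℂ) *
    Complex.exp (Complex.I * ((2 * Real.pi / L : ℝ) : ℂ) * ∑ i, (n i : ℂ) * (x i : ℂ))

/-- function with Fourier coefficients c -/
def fromCoeff (L : ℝ) (c : (Fin 3 → ℤ) → ℂ) (x : Fin 3 → ℝ) : ℂ :=
  ∑' n : Fin 3 → ℤ, c n * ek L n x

/-- the simulation cell Γ = [0,L)³ -/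
def Gam (L : ℝ) : Set (Fin 3 → ℝ) := Set.univ.pi fun _ => Set.Ico 0 L

/-- point of the cartesian grid G_{N_g} in Γ -/
def gridPt (L : ℝ) (Ng : ℕ) (m : Fin 3 → Fin Ng) : Fin 3 → ℝ :=
  fun i => (L / Ng) * (m i : ℝ)

/-- discrete Fourier transform on the grid -/
def dft (L : ℝ) (Ng : ℕ) (φ : (Fin 3 → ℝ) → ℂ) (n : Fin 3 → ℤ) : ℂ :=
  ((Ng : ℂ) ^ 3)⁻¹ * ∑ m : Fin 3 → Fin Ng, φ (gridPt L Ng m) *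
    Complex.exp (-(Complex.I * ((2 * Real.pi / L : ℝ) : ℂ) *
      ∑ i, (n i : ℂ) * ((gridPt L Ng m i : ℝ) : ℂ)))

/-- cube of integer vectors with entries in [-R,R] -/
def cube (R : ℤ) : Finset (Fin 3 → ℤ) := Fintype.piFinset fun _ => Finset.Icc (-R) R

/-- wavevector indices with |k| ≤ 2πN/L -/
def ball (L : ℝ) (N : ℕ) : Finset (Fin 3 → ℤ) :=
  (cube N).filter fun n => knorm L n ≤ 2 * Real.pi * N / L

/-- modes used by the interpolation operator (N_g odd) -/
def interpModes (Ng : ℕ) : Finset (Fin 3 → ℤ) := cube (((Ng : ℤ) - 1) / 2)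

/-- interpolation operator I_{N_g} (for N_g odd) -/
def interp (L : ℝ) (Ng : ℕ) (φ : (Fin 3 → ℝ) → ℂ) (x : Fin 3 → ℝ) : ℂ :=
  (((L ^ 3 : ℝ) ^ ((1/2 : ℝ)) : ℝ) : ℂ) * ∑ n ∈ interpModes Ng, dft L Ng φ n * ek L n x

/-- truncated interpolant Π_{2N_c}(I_{N_g} φ) (valid when N_g ≥ 4N_c+1, N_g odd) -/
def truncInterp (L : ℝ) (Ng Nc : ℕ) (φ : (Fin 3 → ℝ) → ℂ) (x : Fin 3 → ℝ) : ℂ :=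
  (((L ^ 3 : ℝ) ^ ((1/2 : ℝ)) : ℝ) : ℂ) * ∑ n ∈ ball L (2 * Nc), dft L Ng φ n * ek L n x

/-- Fourier coefficient of a function on Γ -/
def fCoeff (L : ℝ) (f : (Fin 3 → ℝ) → ℂ) (n : Fin 3 → ℤ) : ℂ :=
  ∫ x in Gam L, f x * (starRingEnd ℂ) (ek L n x)

/-- periodic Coulomb bilinear form from Fourier coefficients -/
def DGam (L : ℝ) (c d : (Fin 3 → ℤ) → ℂ) : ℂ :=
  ((4 * Real.pi : ℝ) : ℂ) * ∑' n : Fin 3 → ℤ,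
    if n = 0 then 0 else ((((knorm L n) ^ 2)⁻¹ : ℝ) : ℂ) * (starRingEnd ℂ) (c n) * d n

end TFW

/-!
Both sides are grid quadratures. Integrating `I_{N_g} φ` over `Γ` kills every mode but the zero
one, so `∫ I_{N_g} φ = (L/N_g)³ ∑ φ(x_m)`. On the other side `v w` is a combination of plane
waves `e^{2πi k·x/L}` with `|k_i| ≤ 2 N_c`; integrating `I_{N_g} V` against such a wave picks out
the discrete Fourier coefficient of `V` at `-k`, which is one of the interpolation modes because
`2 N_c ≤ (N_g - 1)/2`, and that coefficient is the grid quadrature of `V e^{2πi k·x/L}`.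
-/
open MeasureTheory Complex

namespace TFW

def wave (L : ℝ) (a : Fin 3 → ℤ) (x : Fin 3 → ℝ) : ℂ :=
  exp (I * ((2 * Real.pi / L : ℝ) : ℂ) * ∑ i, (a i : ℂ) * (x i : ℂ))

def gridMean (L : ℝ) (Ng : ℕ) (φ : (Fin 3 → ℝ) → ℂ) : ℂ :=
  ((Ng : ℂ) ^ 3)⁻¹ * ∑ m : Fin 3 → Fin Ng, φ (gridPt L Ng m)

section Wave

variable {L : ℝ}

theorem wave_add (a b : Fin 3 → ℤ) (x : Fin 3 → ℝ) :
    wave L (a + b) x = wave L a x * wave L b x := by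
  simp only [wave, ← exp_add, ← mul_add, ← Finset.sum_add_distrib, Pi.add_apply, Int.cast_add,
    add_mul]

theorem wave_zero (x : Fin 3 → ℝ) : wave L 0 x = 1 := by
  simp [wave]

@[fun_prop]
theorem continuous_wave (a : Fin 3 → ℤ) : Continuous (wave L a) := by
  unfold wave
  fun_prop

theorem ek_eq_mul_wave (n : Fin 3 → ℤ) (x : Fin 3 → ℝ) :
    ek L n x = (((L ^ 3 : ℝ) ^ (-(1/2 : ℝ)) : ℝ) : ℂ) * wave L n x := rfl

theorem integral_exp_Ico (hL : 0 < L) (n : ℤ) :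
    ∫ y in Set.Ico 0 L, exp (I * ((2 * Real.pi / L : ℝ) : ℂ) * n * y) =
      if n = 0 then (L : ℂ) else 0 := by
  rw [restrict_Ico_eq_restrict_Ioc, ← intervalIntegral.integral_of_le hL.le]
  split_ifs with hn
  · simp [hn]
  have hc : I * ((2 * Real.pi / L : ℝ) : ℂ) * n ≠ 0 := by
    simp [hn, hL.ne', Real.pi_ne_zero]
  have hperiod : I * ((2 * Real.pi / L : ℝ) : ℂ) * n * L = n * (2 * Real.pi * I) := by
    have : (L : ℂ) ≠ 0 := by exact_mod_cast hL.ne'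
    push_cast
    field_simp
  rw [integral_exp_mul_complex hc, hperiod, exp_int_mul_two_pi_mul_I]
  simp

theorem integral_wave (hL : 0 < L) (a : Fin 3 → ℤ) :
    ∫ x in Gam L, wave L a x = if a = 0 then (L : ℂ) ^ 3 else 0 := by
  have hprod : ∀ x : Fin 3 → ℝ,
      wave L a x = ∏ i, exp (I * ((2 * Real.pi / L : ℝ) : ℂ) * (a i) * (x i)) := fun x => by
    rw [wave, ← exp_sum, Finset.mul_sum]
    simp only [mul_assoc]
  simp_rw [hprod, Gam, volume_pi]
  rw [Measure.restrict_pi_pi, integral_fintype_prod_eq_prod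
    (fun i (y : ℝ) => exp (I * ((2 * Real.pi / L : ℝ) : ℂ) * a i * y))]
  simp_rw [integral_exp_Ico hL, Fintype.prod_ite_zero, Finset.prod_const, Finset.card_univ,
    Fintype.card_fin, funext_iff, Pi.zero_apply]

end Wave

section Interpolation

variable {L : ℝ} {Ng : ℕ}

theorem integrableOn_Gam {f : (Fin 3 → ℝ) → ℂ} (hf : Continuous f) : IntegrableOn f (Gam L) :=
  (hf.continuousOn.integrableOn_compact (isCompact_univ_pi fun _ => isCompact_Icc)).mono_set
    (Set.pi_mono fun _ _ => Set.Ico_subset_Icc_self)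

theorem interp_eq_sum_wave (hL : 0 < L) (φ : (Fin 3 → ℝ) → ℂ) (x : Fin 3 → ℝ) :
    interp L Ng φ x = ∑ n ∈ interpModes Ng, dft L Ng φ n * wave L n x := by
  have hnorm : (((L ^ 3 : ℝ) ^ (1/2 : ℝ) : ℝ) : ℂ) * (((L ^ 3 : ℝ) ^ (-(1/2 : ℝ)) : ℝ) : ℂ) = 1 := by
    rw [← ofReal_mul, ← Real.rpow_add (by positivity)]
    norm_num
  simp only [interp, ek_eq_mul_wave, Finset.mul_sum]
  exact Finset.sum_congr rfl fun n _ => by linear_combination dft L Ng φ n * wave L n x * hnorm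

theorem dft_eq_gridMean (φ : (Fin 3 → ℝ) → ℂ) (n : Fin 3 → ℤ) :
    dft L Ng φ n = gridMean L Ng (fun x => φ x * wave L (-n) x) := by
  simp only [dft, gridMean, wave, Pi.neg_apply, Int.cast_neg, neg_mul, Finset.sum_neg_distrib,
    mul_neg]

theorem zero_mem_interpModes (hNg : 1 ≤ Ng) : 0 ∈ interpModes Ng := by
  simp only [interpModes, cube, Fintype.mem_piFinset, Finset.mem_Icc, Pi.zero_apply]
  omega

theorem integral_interp_mul_wave (hL : 0 < L) (φ : (Fin 3 → ℝ) → ℂ) {k : Fin 3 → ℤ}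
    (hk : -k ∈ interpModes Ng) :
    ∫ x in Gam L, interp L Ng φ x * wave L k x =
      (L : ℂ) ^ 3 * gridMean L Ng (fun x => φ x * wave L k x) := by
  have hterm : ∀ n : Fin 3 → ℤ,
      ∫ x in Gam L, dft L Ng φ n * wave L n x * wave L k x =
        if n = -k then (L : ℂ) ^ 3 * dft L Ng φ n else 0 := fun n => by
    simp_rw [mul_assoc, ← wave_add, integral_const_mul, integral_wave hL, add_eq_zero_iff_eq_neg]
    split_ifs <;> ring
  simp_rw [interp_eq_sum_wave hL, Finset.sum_mul]
  rw [integral_finsetSum _ fun n _ => integrableOn_Gam (by fun_prop)]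
  simp_rw [hterm, Finset.sum_ite_eq', if_pos hk, dft_eq_gridMean, neg_neg]

theorem integral_interp (hL : 0 < L) (hNg : 1 ≤ Ng) (φ : (Fin 3 → ℝ) → ℂ) :
    ∫ x in Gam L, interp L Ng φ x = (L : ℂ) ^ 3 * gridMean L Ng φ := by
  simpa only [wave_zero, mul_one] using
    integral_interp_mul_wave hL φ (k := 0) (by simpa using zero_mem_interpModes hNg)

theorem integral_interp_mul_sum_wave (hL : 0 < L) (φ : (Fin 3 → ℝ) → ℂ) {ι : Type*}
    (s : Finset ι) (d : ι → ℂ) {k : ι → Fin 3 → ℤ} (hk : ∀ i ∈ s, -k i ∈ interpModes Ng) :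
    ∫ x in Gam L, interp L Ng φ x * ∑ i ∈ s, d i * wave L (k i) x =
      (L : ℂ) ^ 3 * gridMean L Ng (fun x => φ x * ∑ i ∈ s, d i * wave L (k i) x) := by
  have hterm : ∀ i ∈ s, ∫ x in Gam L, interp L Ng φ x * (d i * wave L (k i) x) =
      d i * ((L : ℂ) ^ 3 * gridMean L Ng (fun x => φ x * wave L (k i) x)) := fun i hi => by
    simp_rw [mul_left_comm _ (d i), integral_const_mul, integral_interp_mul_wave hL φ (hk i hi)]
  have hinterp : Continuous (interp L Ng φ) := by
    simp_rw [funext (interp_eq_sum_wave hL φ)]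
    fun_prop
  simp_rw [Finset.mul_sum]
  rw [integral_finsetSum _ fun i _ => integrableOn_Gam (by fun_prop), Finset.sum_congr rfl hterm]
  simp only [gridMean, Finset.mul_sum]
  rw [Finset.sum_comm]
  refine Finset.sum_congr rfl fun m _ => Finset.sum_congr rfl fun i _ => by ring

end Interpolation

section BandLimited

variable {L : ℝ}

theorem mem_cube_of_knorm_le (hL : 0 < L) {N : ℕ} {n : Fin 3 → ℤ}
    (h : knorm L n ≤ 2 * Real.pi * N / L) : n ∈ cube N := by
  have hsqrt : Real.sqrt (zsq n) ≤ N :=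
    le_of_mul_le_mul_left (h.trans_eq (by ring)) (by positivity)
  have hzsq : zsq n ≤ (N : ℝ) ^ 2 := (Real.sqrt_le_left (Nat.cast_nonneg N)).1 hsqrt
  simp only [cube, Fintype.mem_piFinset, Finset.mem_Icc]
  intro i
  have hi : ((n i : ℝ)) ^ 2 ≤ (N : ℝ) ^ 2 :=
    (Finset.single_le_sum (fun j _ => sq_nonneg ((n j : ℝ))) (Finset.mem_univ i)).trans hzsq
  exact_mod_cast abs_le_of_sq_le_sq' hi (Nat.cast_nonneg N)

theorem fromCoeff_eq_sum (hL : 0 < L) {N : ℕ} {c : (Fin 3 → ℤ) → ℂ}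
    (hc : ∀ n, 2 * Real.pi * N / L < knorm L n → c n = 0) (x : Fin 3 → ℝ) :
    fromCoeff L c x = ∑ n ∈ cube N, c n * ek L n x :=
  tsum_eq_sum fun n hn => by
    rw [hc n (not_le.1 fun h => hn (mem_cube_of_knorm_le hL h)), zero_mul]

theorem sum_ek_mul_sum_ek (s t : Finset (Fin 3 → ℤ)) (a b : (Fin 3 → ℤ) → ℂ) (x : Fin 3 → ℝ) :
    (∑ p ∈ s, a p * ek L p x) * (∑ q ∈ t, b q * ek L q x) =
      ∑ i ∈ s ×ˢ t, (((L ^ 3 : ℝ) ^ (-(1/2 : ℝ)) : ℝ) : ℂ) ^ 2 * a i.1 * b i.2 *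
        wave L (i.1 + i.2) x := by
  rw [Finset.sum_mul_sum, Finset.sum_product]
  refine Finset.sum_congr rfl fun p _ => Finset.sum_congr rfl fun q _ => ?_
  rw [ek_eq_mul_wave, ek_eq_mul_wave, wave_add]
  ring

theorem neg_add_mem_interpModes {N Ng : ℕ} (hNg : 4 * N + 1 ≤ Ng) {p q : Fin 3 → ℤ}
    (hp : p ∈ cube N) (hq : q ∈ cube N) : -(p + q) ∈ interpModes Ng := by
  simp only [interpModes, cube, Fintype.mem_piFinset, Finset.mem_Icc, Pi.neg_apply,
    Pi.add_apply] at hp hq ⊢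
  intro i
  have hpi := hp i
  have hqi := hq i
  omega

end BandLimited

end TFW

theorem stmt4_general (L : ℝ) (hL : 0 < L) (Nc Ng : ℕ) (hNg : 4 * Nc + 1 ≤ Ng)
    (V : (Fin 3 → ℝ) → ℝ)
    (cv cw : (Fin 3 → ℤ) → ℂ)
    (hv : ∀ n, 2 * Real.pi * Nc / L < TFW.knorm L n → cv n = 0)
    (hw : ∀ n, 2 * Real.pi * Nc / L < TFW.knorm L n → cw n = 0) :
    ∫ x in TFW.Gam L,
        TFW.interp L Ng (fun y => (V y : ℂ) * TFW.fromCoeff L cv y * TFW.fromCoeff L cw y) x =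
      ∫ x in TFW.Gam L,
        TFW.interp L Ng (fun y => (V y : ℂ)) x * TFW.fromCoeff L cv x * TFW.fromCoeff L cw x := by
  set S := TFW.cube Nc ×ˢ TFW.cube Nc
  set d : (Fin 3 → ℤ) × (Fin 3 → ℤ) → ℂ := fun i =>
    (((L ^ 3 : ℝ) ^ (-(1/2 : ℝ)) : ℝ) : ℂ) ^ 2 * cv i.1 * cw i.2
  have hvw : ∀ x, TFW.fromCoeff L cv x * TFW.fromCoeff L cw x =
      ∑ i ∈ S, d i * TFW.wave L (i.1 + i.2) x := fun x => by
    rw [TFW.fromCoeff_eq_sum hL hv, TFW.fromCoeff_eq_sum hL hw, TFW.sum_ek_mul_sum_ek]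
  have hS : ∀ i ∈ S, -(i.1 + i.2) ∈ TFW.interpModes Ng := fun i hi =>
    TFW.neg_add_mem_interpModes hNg (Finset.mem_product.1 hi).1 (Finset.mem_product.1 hi).2
  simp only [mul_assoc, hvw]
  rw [TFW.integral_interp hL (by omega), TFW.integral_interp_mul_sum_wave hL _ S d hS]

/-- ∫ I_{N_g}(V v w) = ∫ I_{N_g}(V) v w for v, w ∈ V_{N_c}, N_g ≥ 4N_c+1. -/
theorem stmt4 (L : ℝ) (hL : 0 < L) (Nc Ng : ℕ) (hNg : 4 * Nc + 1 ≤ Ng) (hodd : Odd Ng)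
    (V : (Fin 3 → ℝ) → ℝ) (hVcont : Continuous V)
    (hVper : ∀ (x : Fin 3 → ℝ) (p : Fin 3 → ℤ), V (fun i => x i + L * (p i : ℝ)) = V x)
    (cv cw : (Fin 3 → ℤ) → ℂ)
    (hv : ∀ n, 2 * Real.pi * Nc / L < TFW.knorm L n → cv n = 0)
    (hw : ∀ n, 2 * Real.pi * Nc / L < TFW.knorm L n → cw n = 0)
    (hvreal : ∀ n, cv (-n) = (starRingEnd ℂ) (cv n))
    (hwreal : ∀ n, cw (-n) = (starRingEnd ℂ) (cw n)) :
    ∫ x in TFW.Gam L,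
        TFW.interp L Ng (fun y => (V y : ℂ) * TFW.fromCoeff L cv y * TFW.fromCoeff L cw y) x =
      ∫ x in TFW.Gam L,
        TFW.interp L Ng (fun y => (V y : ℂ)) x * TFW.fromCoeff L cv x * TFW.fromCoeff L cw x :=
  stmt4_general L hL Nc Ng hNg V cv cw hv hw
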